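/- Let ρ ∈ L¹(ℝ³) ∩ L³(ℝ³) be nonnegative and let u(x) = ∫_{ℝ³} U(x−z) e₃ ρ(z) dz where U is the Oseen tensor. Then u is log-Lipschitz: there exists C depending only on ‖ρ‖_{L¹∩L³} such that |u(x)−u(y)| ≤ C|x−y|(1 + max(0, −log|x−y|)) for all x ≠ y in ℝ³. -/

import Mathlib

open MeasureTheory
open scoped RealInnerProductSpace

/-- The Oseen tensor `U(x)`, as the linear map `v ↦ U(x) v` on `ℝ³`. -/
noncomputable def oseen (x v : EuclideanSpace ℝ (Fin 3)) : EuclideanSpace ℝ (Fin 3) :=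
  (1 / (8 * Real.pi * ‖x‖)) • (v + (⟪x, v⟫ / ‖x‖ ^ 2) • x)

/-- The third basis vector `e₃` of `ℝ³`. -/
noncomputable def e₃ : EuclideanSpace ℝ (Fin 3) := EuclideanSpace.single 2 1

/-- The velocity `u(x) = ∫ U(x−z) e₃ ρ(z) dz` generated by a density `ρ`. -/
noncomputable def oseenVel (ρ : EuclideanSpace ℝ (Fin 3) → ℝ)
    (x : EuclideanSpace ℝ (Fin 3)) : EuclideanSpace ℝ (Fin 3) :=
  ∫ z, ρ z • oseen (x - z) e₃

/-!
The kernel `K(w) = U(w) e₃` obeys `|K(w)| ≤ 1/|w|` and, writing `U(w) v = (v + ⟨n, v⟩ n)/(8π|w|)`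
with `n = w/|w|`, also `|K(w) - K(w')| ≤ 2|w - w'|/|w|²` whenever `2|w - w'| ≤ |w|`.
Put `d = |x - y|` and split `u(x) - u(y) = ∫ ρ(z) (K(x - z) - K(y - z)) dz` at `|x - z| = 2d`.
By Hölder, `ρ` carries mass `≤ ‖ρ‖_{L³} |B_{2r}|^{2/3} ~ r²` on a dyadic annulus `r ≤ |a - z| < 2r`.
Near `x` we bound both kernels by `1/|a - z|`; summing over the annuli inside `B(a, c)` gives the
geometric series `∫_{B(a,c)} |ρ|/|a - z| ≲ ‖ρ‖_{L³} c`. Far from `x` we use the difference bound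
`d/|x - z|²`: the region `|x - z| ≥ 1` contributes `d ‖ρ‖_{L¹}`, and each of the `O(1 + ln₋ d)`
dyadic annuli between `2d` and `1` contributes `≲ d ‖ρ‖_{L³}`.
-/

open Metric Real
open scoped ENNReal NNReal

local notation "ℝ³" => EuclideanSpace ℝ (Fin 3)

local notation "κ" => volume (ball (0 : ℝ³) 1) ^ (2 / 3 : ℝ)

section UnitVector

variable {E : Type*} [NormedAddCommGroup E] [InnerProductSpace ℝ E]

lemma norm_inv_norm_smul_le_one (w : E) : ‖‖w‖⁻¹ • w‖ ≤ 1 := by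
  rcases eq_or_ne w 0 with rfl | hw
  · simp
  · exact (norm_smul_inv_norm (𝕜 := ℝ) hw).le

lemma norm_inv_norm_smul_sub_le {w : E} (hw : w ≠ 0) (w' : E) :
    ‖‖w‖⁻¹ • w - ‖w'‖⁻¹ • w'‖ ≤ 2 * ‖w - w'‖ / ‖w‖ := by
  have key : ‖w‖⁻¹ • w - ‖w'‖⁻¹ • w' =
      ‖w‖⁻¹ • ((w - w') + (‖w'‖ - ‖w‖) • ‖w'‖⁻¹ • w') := by
    rcases eq_or_ne w' 0 with rfl | hw'
    · simp
    have := norm_pos_iff.2 hw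
    have := norm_pos_iff.2 hw'
    rw [smul_add, smul_smul, smul_smul, smul_sub]
    match_scalars <;> field_simp
    ring
  rw [key, norm_smul, norm_inv, norm_norm, inv_mul_eq_div]
  gcongr
  calc _ ≤ ‖w - w'‖ + |‖w'‖ - ‖w‖| * 1 := by
        grw [norm_add_le, norm_smul, Real.norm_eq_abs, norm_inv_norm_smul_le_one]
    _ ≤ _ := by rw [abs_sub_comm]; linarith [abs_norm_sub_norm_le w w']

lemma norm_add_inner_smul_le {n : E} (hn : ‖n‖ ≤ 1) (v : E) : ‖v + ⟪n, v⟫ • n‖ ≤ 2 * ‖v‖ :=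
  calc ‖v + ⟪n, v⟫ • n‖ ≤ ‖v‖ + 1 * ‖v‖ * 1 := by
        grw [norm_add_le, norm_smul, Real.norm_eq_abs, abs_real_inner_le_norm, hn, hn]
    _ = 2 * ‖v‖ := by ring

lemma norm_inner_smul_sub_inner_smul_le {n n' : E} (hn : ‖n‖ ≤ 1) (hn' : ‖n'‖ ≤ 1) (v : E) :
    ‖⟪n, v⟫ • n - ⟪n', v⟫ • n'‖ ≤ 2 * ‖n - n'‖ * ‖v‖ := by
  have : ⟪n, v⟫ • n - ⟪n', v⟫ • n' = ⟪n - n', v⟫ • n + ⟪n', v⟫ • (n - n') := by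
    rw [inner_sub_left, sub_smul, smul_sub]
    abel
  rw [this]
  calc _ ≤ ‖n - n'‖ * ‖v‖ * 1 + 1 * ‖v‖ * ‖n - n'‖ := by
        grw [norm_add_le, norm_smul, norm_smul, Real.norm_eq_abs, Real.norm_eq_abs,
          abs_real_inner_le_norm, abs_real_inner_le_norm, hn, hn']
    _ = 2 * ‖n - n'‖ * ‖v‖ := by ring

end UnitVector

section Lebesgue

variable {α E : Type*} [MeasurableSpace α] {μ : Measure α} [NormedAddCommGroup E]

lemma setLIntegral_enorm_le_eLpNorm_mul_measure_rpow {f : α → E}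
    (hf : AEStronglyMeasurable f μ) {p : ℝ≥0∞} (hp : 1 ≤ p) (s : Set α) :
    ∫⁻ x in s, ‖f x‖ₑ ∂μ ≤ eLpNorm f p μ * μ s ^ (1 - p.toReal⁻¹) := by
  have h := eLpNorm_le_eLpNorm_mul_rpow_measure_univ hp hf.restrict (μ := μ.restrict s)
  rw [eLpNorm_one_eq_lintegral_enorm, Measure.restrict_apply_univ] at h
  simp only [ENNReal.toReal_one, div_one, one_div] at h
  exact h.trans (mul_le_mul_left (eLpNorm_mono_measure _ Measure.restrict_le_self) _)

lemma setLIntegral_enorm_le_eLpNorm_one (f : α → E) (s : Set α) :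
    ∫⁻ x in s, ‖f x‖ₑ ∂μ ≤ eLpNorm f 1 μ :=
  (setLIntegral_le_lintegral _ _).trans_eq eLpNorm_one_eq_lintegral_enorm.symm

lemma setLIntegral_mul_le_of_le {s : Set α} (hs : MeasurableSet s) (f : α → ℝ≥0∞)
    {g : α → ℝ≥0∞} {m : ℝ≥0∞} (hm : m ≠ ∞) (hg : ∀ x ∈ s, g x ≤ m) :
    ∫⁻ x in s, f x * g x ∂μ ≤ (∫⁻ x in s, f x ∂μ) * m := by
  rw [← lintegral_mul_const' _ _ hm]
  exact setLIntegral_mono' hs fun x hx => by gcongr; exact hg x hx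

end Lebesgue

lemma coe_le_enorm_sub_of_notMem_ball {E : Type*} [SeminormedAddCommGroup E] {a z : E}
    {r : ℝ≥0} (hz : z ∉ ball a r) : (r : ℝ≥0∞) ≤ ‖a - z‖ₑ := by
  rw [← edist_eq_enorm_sub, edist_nndist, ENNReal.coe_le_coe, ← NNReal.coe_le_coe, coe_nndist,
    dist_comm]
  exact not_lt.1 hz

lemma exists_lt_mem_diff_succ {α : Type*} {s : ℕ → Set α} {x : α} {n : ℕ} (h0 : x ∈ s 0)
    (hn : x ∉ s n) : ∃ k < n, x ∈ s k \ s (k + 1) := by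
  induction n with
  | zero => exact absurd h0 hn
  | succ n ih =>
    by_cases hxn : x ∈ s n
    · exact ⟨n, n.lt_succ_self, hxn, hn⟩
    · obtain ⟨k, hk, hx⟩ := ih hxn
      exact ⟨k, hk.trans n.lt_succ_self, hx⟩

-- `n` counts the dyadic annuli needed to get from radius `2d` out to radius `1`.
lemma exists_one_le_two_pow_mul_and_le {d : ℝ} (hd : 0 < d) :
    ∃ n : ℕ, 1 ≤ 2 ^ n * (2 * d) ∧ (n : ℝ) ≤ 2 * (1 + max 0 (-log d)) := by
  set L := max 0 (-log d)
  have hlog2 := log_two_gt_d9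
  have hL : 0 ≤ L / log 2 := div_nonneg (le_max_left _ _) (by linarith)
  refine ⟨⌈L / log 2⌉₊, ?_, ?_⟩
  · have : d⁻¹ ≤ 2 ^ ⌈L / log 2⌉₊ :=
      calc d⁻¹ = exp (-log d) := by rw [exp_neg, exp_log hd]
        _ ≤ exp (L / log 2 * log 2) := by
          rw [div_mul_cancel₀ _ (by linarith)]
          exact exp_le_exp.2 (le_max_right _ _)
        _ ≤ exp (⌈L / log 2⌉₊ * log 2) := by
          gcongr
          exact Nat.le_ceil _
        _ = 2 ^ ⌈L / log 2⌉₊ := by rw [exp_nat_mul, exp_log two_pos]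
    rw [inv_le_iff_one_le_mul₀ hd] at this
    nlinarith
  · have := Nat.ceil_lt_add_one hL
    have : L / log 2 ≤ 2 * L := by
      rw [div_le_iff₀ (by linarith)]
      nlinarith [le_max_left 0 (-log d)]
    linarith

section OseenKernel

lemma norm_e₃ : ‖e₃‖ = 1 := by simp [e₃]

lemma measurable_oseen (v : ℝ³) : Measurable (oseen · v) := by
  unfold oseen
  fun_prop

lemma oseen_eq_smul (w v : ℝ³) :
    oseen w v = (8 * π * ‖w‖)⁻¹ • (v + ⟪‖w‖⁻¹ • w, v⟫ • ‖w‖⁻¹ • w) := by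
  rcases eq_or_ne w 0 with rfl | hw
  · simp [oseen]
  have := norm_pos_iff.2 hw
  rw [oseen, real_inner_smul_left, smul_smul, one_div]
  congr 3
  field_simp

lemma norm_oseen_le (w v : ℝ³) : ‖oseen w v‖ ≤ ‖v‖ / ‖w‖ := by
  rw [oseen_eq_smul, norm_smul, norm_inv, Real.norm_eq_abs, abs_of_nonneg (by positivity)]
  grw [norm_add_inner_smul_le (norm_inv_norm_smul_le_one w)]
  rw [inv_mul_eq_div, show 2 * ‖v‖ / (8 * π * ‖w‖) = (4 * π)⁻¹ * (‖v‖ / ‖w‖) by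
    field_simp; ring]
  exact mul_le_of_le_one_left (by positivity) (inv_le_one_of_one_le₀ (by linarith [pi_gt_three]))

lemma norm_oseen_sub_oseen_le {w w' : ℝ³} (hw : w ≠ 0) (hw' : w' ≠ 0) (v : ℝ³) :
    ‖oseen w v - oseen w' v‖ ≤ ‖v‖ * ‖w - w'‖ / (‖w‖ * ‖w'‖) := by
  have hr := norm_pos_iff.2 hw
  have hr' := norm_pos_iff.2 hw'
  rw [oseen_eq_smul, oseen_eq_smul]
  set n := ‖w‖⁻¹ • w
  set n' := ‖w'‖⁻¹ • w'
  have key : (8 * π * ‖w‖)⁻¹ • (v + ⟪n, v⟫ • n) - (8 * π * ‖w'‖)⁻¹ • (v + ⟪n', v⟫ • n') =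
      (8 * π)⁻¹ • ((‖w‖⁻¹ - ‖w'‖⁻¹) • (v + ⟪n, v⟫ • n) +
        ‖w'‖⁻¹ • (⟪n, v⟫ • n - ⟪n', v⟫ • n')) := by
    match_scalars <;> field_simp
    ring
  have hinv : |‖w‖⁻¹ - ‖w'‖⁻¹| ≤ ‖w - w'‖ / (‖w‖ * ‖w'‖) := by
    rw [inv_sub_inv hr.ne' hr'.ne', abs_div, abs_of_pos (mul_pos hr hr'), abs_sub_comm]
    gcongr
    exact abs_norm_sub_norm_le w w'
  rw [key, norm_smul, norm_inv, Real.norm_eq_abs, abs_of_pos (by positivity)]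
  calc (8 * π)⁻¹ *
        ‖(‖w‖⁻¹ - ‖w'‖⁻¹) • (v + ⟪n, v⟫ • n) + ‖w'‖⁻¹ • (⟪n, v⟫ • n - ⟪n', v⟫ • n')‖
      ≤ (8 * π)⁻¹ * (‖w - w'‖ / (‖w‖ * ‖w'‖) * (2 * ‖v‖) +
          ‖w'‖⁻¹ * (2 * (2 * ‖w - w'‖ / ‖w‖) * ‖v‖)) := by
        grw [norm_add_le, norm_smul, norm_smul, Real.norm_eq_abs, hinv,
          norm_add_inner_smul_le (norm_inv_norm_smul_le_one w),
          norm_inner_smul_sub_inner_smul_le (norm_inv_norm_smul_le_one w)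
            (norm_inv_norm_smul_le_one w'),
          norm_inv_norm_smul_sub_le hw, norm_inv, norm_norm]
    _ = 6 / (8 * π) * (‖v‖ * ‖w - w'‖ / (‖w‖ * ‖w'‖)) := by field_simp; ring
    _ ≤ ‖v‖ * ‖w - w'‖ / (‖w‖ * ‖w'‖) :=
        mul_le_of_le_one_left (by positivity)
          ((div_le_one (by positivity)).2 (by linarith [pi_gt_three]))

lemma enorm_oseen_e₃_le (w : ℝ³) : ‖oseen w e₃‖ₑ ≤ ‖w‖ₑ⁻¹ := by
  rcases eq_or_ne w 0 with rfl | hw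
  · simp
  rw [← ofReal_norm, ← ofReal_norm, ← ENNReal.ofReal_inv_of_pos (norm_pos_iff.2 hw)]
  exact ENNReal.ofReal_le_ofReal ((norm_oseen_le w e₃).trans_eq (by rw [norm_e₃, one_div]))

lemma enorm_oseen_e₃_sub_le {w w' : ℝ³} (hw : w ≠ 0) (h : 2 * ‖w - w'‖ ≤ ‖w‖) :
    ‖oseen w e₃ - oseen w' e₃‖ₑ ≤ 2 * ‖w - w'‖ₑ / ‖w‖ₑ ^ 2 := by
  have hr := norm_pos_iff.2 hw
  have hr' : ‖w‖ / 2 ≤ ‖w'‖ := by linarith [norm_sub_norm_le w w']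
  have hw' : w' ≠ 0 := norm_pos_iff.1 (by linarith)
  have hreal : ‖oseen w e₃ - oseen w' e₃‖ ≤ 2 * ‖w - w'‖ / ‖w‖ ^ 2 := by
    grw [norm_oseen_sub_oseen_le hw hw', norm_e₃, one_mul, ← hr']
    apply le_of_eq
    field_simp
  refine (ofReal_norm _).symm.trans_le ((ENNReal.ofReal_le_ofReal hreal).trans_eq ?_)
  rw [ENNReal.ofReal_div_of_pos (by positivity), ENNReal.ofReal_mul (by norm_num),
    ENNReal.ofReal_pow (norm_nonneg _), ofReal_norm, ofReal_norm, ENNReal.ofReal_ofNat]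

end OseenKernel

section DyadicAnnuli

lemma volume_unitBall_rpow_ne_top : κ ≠ ∞ := by
  have : volume (ball (0 : ℝ³) 1) < ∞ := measure_ball_lt_top
  finiteness

lemma volume_ball_rpow_two_div_three (a : ℝ³) (r : ℝ≥0) :
    volume (ball a r) ^ (2 / 3 : ℝ) = κ * (r : ℝ≥0∞) ^ 2 := by
  rw [Measure.addHaar_ball _ _ r.coe_nonneg, finrank_euclideanSpace_fin,
    ENNReal.mul_rpow_of_nonneg _ _ (by norm_num), mul_comm, ← NNReal.coe_pow,
    ENNReal.ofReal_coe_nnreal, ENNReal.coe_pow, ← ENNReal.rpow_natCast, ← ENNReal.rpow_mul]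
  norm_num

variable {ρ : ℝ³ → ℝ}

lemma setLIntegral_annulus_le (hρ : AEStronglyMeasurable ρ volume) (a : ℝ³) (r : ℝ≥0) :
    ∫⁻ z in ball a (2 * r) \ ball a r, ‖ρ z‖ₑ ≤
      4 * κ * eLpNorm ρ 3 volume * (r : ℝ≥0∞) ^ 2 := by
  have hvol : volume (ball a (2 * r) \ ball a r) ^ (2 / 3 : ℝ) ≤ κ * (2 * r : ℝ≥0) ^ 2 := by
    rw [← volume_ball_rpow_two_div_three]
    gcongr
    exact Set.sdiff_subset
  calc _ ≤ eLpNorm ρ 3 volume * volume (ball a (2 * r) \ ball a r) ^ (2 / 3 : ℝ) := by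
        convert setLIntegral_enorm_le_eLpNorm_mul_measure_rpow hρ
          (by norm_num : (1 : ℝ≥0∞) ≤ 3) _
        norm_num
    _ ≤ eLpNorm ρ 3 volume * (κ * (2 * r : ℝ≥0) ^ 2) := by gcongr
    _ = _ := by push_cast; ring

lemma setLIntegral_ball_div_enorm_le (hρ : AEStronglyMeasurable ρ volume) (a : ℝ³) (c : ℝ≥0) :
    ∫⁻ z in ball a c, ‖ρ z‖ₑ / ‖a - z‖ₑ ≤ 4 * κ * eLpNorm ρ 3 volume * c := by
  rcases eq_or_ne c 0 with rfl | hc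
  · simp
  have hc' : (0 : ℝ) < c := NNReal.coe_pos.2 (pos_iff_ne_zero.2 hc)
  set r : ℕ → ℝ≥0 := fun k => c * 2⁻¹ ^ (k + 1)
  have hr : ∀ k, r k ≠ 0 := fun k => by simp [r, hc]
  have hcover : ball a c ⊆ {a} ∪ ⋃ k, ball a (2 * r k) \ ball a (r k) := by
    intro z hz
    rcases eq_or_ne z a with rfl | hza
    · exact Or.inl rfl
    obtain ⟨n, hn⟩ := exists_pow_lt_of_lt_one (div_pos (dist_pos.2 hza) hc')
      (by norm_num : (2⁻¹ : ℝ) < 1)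
    obtain ⟨k, -, hk⟩ := exists_lt_mem_diff_succ (s := fun k => ball a (c * 2⁻¹ ^ k)) (n := n)
      (by simpa using hz) (by simpa [mul_comm] using (le_div_iff₀ hc').1 hn.le)
    refine Or.inr (Set.mem_iUnion.2 ⟨k, ?_⟩)
    convert hk using 3 <;> simp [r, pow_succ]
    ring
  have hshell : ∀ k, ∫⁻ z in ball a (2 * r k) \ ball a (r k), ‖ρ z‖ₑ / ‖a - z‖ₑ ≤
      4 * κ * eLpNorm ρ 3 volume * r k := fun k =>
    calc _ ≤ (∫⁻ z in ball a (2 * r k) \ ball a (r k), ‖ρ z‖ₑ) * (r k : ℝ≥0∞)⁻¹ :=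
          setLIntegral_mul_le_of_le (measurableSet_ball.diff measurableSet_ball) _
            (by simp [hr k]) fun z hz =>
              ENNReal.inv_le_inv.2 (coe_le_enorm_sub_of_notMem_ball hz.2)
      _ ≤ 4 * κ * eLpNorm ρ 3 volume * (r k : ℝ≥0∞) ^ 2 * (r k : ℝ≥0∞)⁻¹ := by
          grw [setLIntegral_annulus_le hρ]
      _ = 4 * κ * eLpNorm ρ 3 volume * r k := by
          rw [pow_two, ← mul_assoc, mul_assoc _ (r k : ℝ≥0∞),
            ENNReal.mul_inv_cancel (by simp [hr k]) (by simp), mul_one]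
  calc _ ≤ ∑' k, ∫⁻ z in ball a (2 * r k) \ ball a (r k), ‖ρ z‖ₑ / ‖a - z‖ₑ := by
        grw [lintegral_mono_set hcover, lintegral_union_le,
          setLIntegral_measure_zero _ _ (measure_singleton a), zero_add, lintegral_iUnion_le]
    _ ≤ ∑' k, 4 * κ * eLpNorm ρ 3 volume * r k := ENNReal.tsum_le_tsum hshell
    _ = _ := by
      simp only [r, ENNReal.tsum_mul_left, ENNReal.coe_mul, ENNReal.coe_pow, ENNReal.coe_inv_two,
        ENNReal.tsum_geometric_add_one, ENNReal.one_sub_inv_two]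
      rw [ENNReal.mul_inv_cancel (by simp) (by simp), mul_one]

lemma setLIntegral_compl_ball_one_div_pow_le (a : ℝ³) (m : ℕ) :
    ∫⁻ z in (ball a 1)ᶜ, ‖ρ z‖ₑ / ‖a - z‖ₑ ^ m ≤ eLpNorm ρ 1 volume :=
  calc _ ≤ (∫⁻ z in (ball a 1)ᶜ, ‖ρ z‖ₑ) * 1 :=
        setLIntegral_mul_le_of_le measurableSet_ball.compl _ ENNReal.one_ne_top fun z hz =>
          ENNReal.inv_le_one.2
            (one_le_pow₀ (by simpa using coe_le_enorm_sub_of_notMem_ball (r := 1) hz))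
    _ ≤ _ := by rw [mul_one]; exact setLIntegral_enorm_le_eLpNorm_one _ _

lemma setLIntegral_compl_ball_div_enorm_sq_le (hρ : AEStronglyMeasurable ρ volume) (a : ℝ³)
    {r : ℝ≥0} {n : ℕ} (hn : 1 ≤ 2 ^ n * r) :
    ∫⁻ z in (ball a r)ᶜ, ‖ρ z‖ₑ / ‖a - z‖ₑ ^ 2 ≤
      eLpNorm ρ 1 volume + n * (4 * κ * eLpNorm ρ 3 volume) := by
  set s : ℕ → ℝ≥0 := fun k => 2 ^ k * r
  have hr : r ≠ 0 := by
    rintro rfl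
    simp at hn
  have hs : ∀ k, s k ≠ 0 := fun k => by simp [s, hr]
  have hcover : (ball a r)ᶜ ⊆ (ball a 1)ᶜ ∪ ⋃ k : Fin n, ball a (2 * s k) \ ball a (s k) := by
    intro z hz
    by_cases hz1 : z ∈ ball a 1
    · obtain ⟨k, hk, hzk⟩ := exists_lt_mem_diff_succ (s := fun k => (ball a (s k))ᶜ) (n := n)
        (by simpa [s] using hz)
        (by simpa [s] using ball_subset_ball (by exact_mod_cast hn) hz1)
      refine Or.inr (Set.mem_iUnion.2 ⟨⟨k, hk⟩, ?_, hzk.1⟩)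
      simpa [s, pow_succ, mul_assoc, mul_left_comm] using hzk.2
    · exact Or.inl hz1
  have hshell : ∀ k, ∫⁻ z in ball a (2 * s k) \ ball a (s k), ‖ρ z‖ₑ / ‖a - z‖ₑ ^ 2 ≤
      4 * κ * eLpNorm ρ 3 volume := fun k =>
    calc _ ≤ (∫⁻ z in ball a (2 * s k) \ ball a (s k), ‖ρ z‖ₑ) * ((s k : ℝ≥0∞) ^ 2)⁻¹ :=
          setLIntegral_mul_le_of_le (measurableSet_ball.diff measurableSet_ball) _
            (by simp [hs k]) fun z hz => ENNReal.inv_le_inv.2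
              (pow_le_pow_left₀ bot_le (coe_le_enorm_sub_of_notMem_ball hz.2) 2)
      _ ≤ 4 * κ * eLpNorm ρ 3 volume * (s k : ℝ≥0∞) ^ 2 * ((s k : ℝ≥0∞) ^ 2)⁻¹ := by
          grw [setLIntegral_annulus_le hρ]
      _ = 4 * κ * eLpNorm ρ 3 volume := by
          rw [mul_assoc _ ((s k : ℝ≥0∞) ^ 2),
            ENNReal.mul_inv_cancel (by simp [hs k]) (by simp), mul_one]
  calc _ ≤ eLpNorm ρ 1 volume +
        ∑' k : Fin n, ∫⁻ z in ball a (2 * s k) \ ball a (s k), ‖ρ z‖ₑ / ‖a - z‖ₑ ^ 2 := by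
        grw [lintegral_mono_set hcover, lintegral_union_le,
          setLIntegral_compl_ball_one_div_pow_le, lintegral_iUnion_le]
    _ ≤ eLpNorm ρ 1 volume + ∑' k : Fin n, 4 * κ * eLpNorm ρ 3 volume := by
        gcongr with k
        exact hshell k
    _ = _ := by simp

end DyadicAnnuli

section Velocity

variable {ρ : ℝ³ → ℝ}

lemma lintegral_div_enorm_lt_top (hρ1 : MemLp ρ 1 volume) (hρ3 : MemLp ρ 3 volume) (a : ℝ³) :
    ∫⁻ z, ‖ρ z‖ₑ / ‖a - z‖ₑ < ∞ := by
  rw [← lintegral_add_compl _ (measurableSet_ball (x := a) (ε := 1))]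
  have hnear := setLIntegral_ball_div_enorm_le hρ3.1 a 1
  have hfar := setLIntegral_compl_ball_one_div_pow_le (ρ := ρ) a 1
  simp only [NNReal.coe_one, pow_one, ENNReal.coe_one, mul_one] at hnear hfar
  refine ENNReal.add_lt_top.2 ⟨hnear.trans_lt ?_, hfar.trans_lt hρ1.eLpNorm_lt_top⟩
  have := hρ3.eLpNorm_lt_top
  have := volume_unitBall_rpow_ne_top
  finiteness

lemma integrable_smul_oseen (hρ1 : MemLp ρ 1 volume) (hρ3 : MemLp ρ 3 volume) (x : ℝ³) :
    Integrable (fun z => ρ z • oseen (x - z) e₃) := by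
  refine ⟨hρ1.1.smul
    ((measurable_oseen e₃).comp (measurable_const.sub measurable_id)).aestronglyMeasurable, ?_⟩
  rw [hasFiniteIntegral_iff_enorm]
  calc ∫⁻ z, ‖ρ z • oseen (x - z) e₃‖ₑ ≤ ∫⁻ z, ‖ρ z‖ₑ / ‖x - z‖ₑ :=
        lintegral_mono fun z => by
          rw [enorm_smul, div_eq_mul_inv]
          gcongr
          exact enorm_oseen_e₃_le _
    _ < ∞ := lintegral_div_enorm_lt_top hρ1 hρ3 x

lemma oseenVel_sub_eq_integral (hρ1 : MemLp ρ 1 volume) (hρ3 : MemLp ρ 3 volume) (x y : ℝ³) :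
    oseenVel ρ x - oseenVel ρ y = ∫ z, ρ z • (oseen (x - z) e₃ - oseen (y - z) e₃) := by
  rw [oseenVel, oseenVel, ← integral_sub (integrable_smul_oseen hρ1 hρ3 x)
    (integrable_smul_oseen hρ1 hρ3 y)]
  simp_rw [smul_sub]

lemma setLIntegral_ball_enorm_oseen_sub_le (hρ : AEStronglyMeasurable ρ volume) (x y : ℝ³) :
    ∫⁻ z in ball x (2 * ‖x - y‖), ‖ρ z‖ₑ * ‖oseen (x - z) e₃ - oseen (y - z) e₃‖ₑ ≤
      20 * κ * eLpNorm ρ 3 volume * ‖x - y‖ₑ := by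
  have hsub : ball x (2 * ‖x - y‖) ⊆ ball y (3 * ‖x - y‖) := fun z hz => by
    rw [mem_ball] at hz ⊢
    linarith [dist_triangle z x y, dist_eq_norm x y]
  have hx := setLIntegral_ball_div_enorm_le hρ x (2 * ‖x - y‖₊)
  have hy := setLIntegral_ball_div_enorm_le hρ y (3 * ‖x - y‖₊)
  push_cast at hx hy
  calc _ ≤ ∫⁻ z in ball x (2 * ‖x - y‖), (‖ρ z‖ₑ / ‖x - z‖ₑ + ‖ρ z‖ₑ / ‖y - z‖ₑ) :=
        lintegral_mono fun z => by
          rw [div_eq_mul_inv, div_eq_mul_inv, ← mul_add]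
          grw [enorm_sub_le, enorm_oseen_e₃_le, enorm_oseen_e₃_le]
    _ = (∫⁻ z in ball x (2 * ‖x - y‖), ‖ρ z‖ₑ / ‖x - z‖ₑ) +
          ∫⁻ z in ball x (2 * ‖x - y‖), ‖ρ z‖ₑ / ‖y - z‖ₑ :=
        lintegral_add_left'
          (hρ.enorm.div (measurable_const.sub measurable_id).enorm.aemeasurable).restrict _
    _ ≤ (∫⁻ z in ball x (2 * ‖x - y‖), ‖ρ z‖ₑ / ‖x - z‖ₑ) +
          ∫⁻ z in ball y (3 * ‖x - y‖), ‖ρ z‖ₑ / ‖y - z‖ₑ :=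
        add_le_add le_rfl (lintegral_mono_set hsub)
    _ ≤ 4 * κ * eLpNorm ρ 3 volume * (2 * ‖x - y‖₊) +
          4 * κ * eLpNorm ρ 3 volume * (3 * ‖x - y‖₊) :=
        add_le_add hx hy
    _ = _ := by rw [enorm_eq_nnnorm]; ring

lemma setLIntegral_compl_ball_enorm_oseen_sub_le (hρ : AEStronglyMeasurable ρ volume)
    {x y : ℝ³} (hxy : x ≠ y) {n : ℕ} (hn : 1 ≤ 2 ^ n * (2 * ‖x - y‖)) :
    ∫⁻ z in (ball x (2 * ‖x - y‖))ᶜ, ‖ρ z‖ₑ * ‖oseen (x - z) e₃ - oseen (y - z) e₃‖ₑ ≤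
      2 * ‖x - y‖ₑ * (eLpNorm ρ 1 volume + n * (4 * κ * eLpNorm ρ 3 volume)) := by
  have hfar := setLIntegral_compl_ball_div_enorm_sq_le hρ x (r := 2 * ‖x - y‖₊) (n := n)
    (by exact_mod_cast hn)
  push_cast at hfar
  calc _ ≤ ∫⁻ z in (ball x (2 * ‖x - y‖))ᶜ, 2 * ‖x - y‖ₑ * (‖ρ z‖ₑ / ‖x - z‖ₑ ^ 2) := by
        refine setLIntegral_mono' measurableSet_ball.compl fun z hz => ?_
        have hzx : 2 * ‖(x - z) - (y - z)‖ ≤ ‖x - z‖ := by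
          rw [sub_sub_sub_cancel_right, ← dist_eq_norm x z, dist_comm]
          exact not_lt.1 hz
        have hxz : x - z ≠ 0 := sub_ne_zero.2 fun h =>
          hz (h ▸ mem_ball_self (mul_pos two_pos (norm_sub_pos_iff.2 hxy)))
        grw [enorm_oseen_e₃_sub_le hxz hzx, sub_sub_sub_cancel_right]
        rw [div_eq_mul_inv, div_eq_mul_inv]
        exact le_of_eq (by ring)
    _ = 2 * ‖x - y‖ₑ * ∫⁻ z in (ball x (2 * ‖x - y‖))ᶜ, ‖ρ z‖ₑ / ‖x - z‖ₑ ^ 2 :=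
        lintegral_const_mul' _ _ (by finiteness)
    _ ≤ _ := by grw [hfar]

lemma lintegral_enorm_smul_oseen_sub_le (hρ : AEStronglyMeasurable ρ volume) {x y : ℝ³}
    (hxy : x ≠ y) {n : ℕ} (hn : 1 ≤ 2 ^ n * (2 * ‖x - y‖)) :
    ∫⁻ z, ‖ρ z • (oseen (x - z) e₃ - oseen (y - z) e₃)‖ₑ ≤
      ‖x - y‖ₑ * (20 * κ * eLpNorm ρ 3 volume +
        2 * (eLpNorm ρ 1 volume + n * (4 * κ * eLpNorm ρ 3 volume))) := by
  simp_rw [enorm_smul]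
  rw [← lintegral_add_compl _ (measurableSet_ball (x := x) (ε := 2 * ‖x - y‖))]
  grw [setLIntegral_ball_enorm_oseen_sub_le hρ,
    setLIntegral_compl_ball_enorm_oseen_sub_le hρ hxy hn]
  exact le_of_eq (by ring)

lemma norm_oseenVel_sub_le (hρ1 : MemLp ρ 1 volume) (hρ3 : MemLp ρ 3 volume) {x y : ℝ³}
    (hxy : x ≠ y) {n : ℕ} (hn : 1 ≤ 2 ^ n * (2 * ‖x - y‖)) :
    ‖oseenVel ρ x - oseenVel ρ y‖ ≤ ‖x - y‖ * (20 * (κ).toReal * (eLpNorm ρ 3 volume).toReal +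
      2 * ((eLpNorm ρ 1 volume).toReal + n * (4 * (κ).toReal * (eLpNorm ρ 3 volume).toReal))) := by
  have hκ := volume_unitBall_rpow_ne_top
  have h1 := hρ1.eLpNorm_ne_top
  have h3 := hρ3.eLpNorm_ne_top
  rw [oseenVel_sub_eq_integral hρ1 hρ3, ← toReal_enorm]
  refine (ENNReal.toReal_mono (by finiteness) ((enorm_integral_le_lintegral_enorm _).trans
    (lintegral_enorm_smul_oseen_sub_le hρ3.1 hxy hn))).trans_eq ?_
  generalize κ = k at hκ ⊢
  generalize eLpNorm ρ 1 volume = N1 at h1 ⊢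
  generalize eLpNorm ρ 3 volume = N3 at h3 ⊢
  lift k to ℝ≥0 using hκ
  lift N1 to ℝ≥0 using h1
  lift N3 to ℝ≥0 using h3
  rw [enorm_eq_nnnorm]
  norm_cast

end Velocity

/-- For nonnegative `ρ ∈ L¹ ∩ L³`, the velocity `u = U ⋆ (ρ e₃)` is log-Lipschitz:
`|u(x)−u(y)| ≤ C |x−y| (1 + ln₋|x−y|)` with `C` depending only on `‖ρ‖_{L¹∩L³}`. -/
theorem oseenVel_logLipschitz (R : ℝ) (hR : 0 < R) :
    ∃ C : ℝ, 0 < C ∧ ∀ ρ : EuclideanSpace ℝ (Fin 3) → ℝ,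
      (∀ z, 0 ≤ ρ z) → MemLp ρ 1 volume → MemLp ρ 3 volume →
      (eLpNorm ρ 1 volume).toReal + (eLpNorm ρ 3 volume).toReal ≤ R →
      ∀ x y : EuclideanSpace ℝ (Fin 3), x ≠ y →
        ‖oseenVel ρ x - oseenVel ρ y‖ ≤
          C * ‖x - y‖ * (1 + max 0 (-Real.log ‖x - y‖)) := by
  refine ⟨(2 + 36 * (κ).toReal) * R, by positivity, fun ρ _ hρ1 hρ3 hρR x y hxy => ?_⟩
  obtain ⟨n, hn, hnL⟩ := exists_one_le_two_pow_mul_and_le (norm_sub_pos_iff.2 hxy)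
  refine (norm_oseenVel_sub_le hρ1 hρ3 hxy hn).trans ?_
  have hL : 0 ≤ max 0 (-Real.log ‖x - y‖) := le_max_left _ _
  have hκ : 0 ≤ (κ).toReal := ENNReal.toReal_nonneg
  have hN1 : 0 ≤ (eLpNorm ρ 1 volume).toReal := ENNReal.toReal_nonneg
  have hN3 : 0 ≤ (eLpNorm ρ 3 volume).toReal := ENNReal.toReal_nonneg
  calc _ ≤ ‖x - y‖ * (20 * (κ).toReal * R +
        2 * (R + 2 * (1 + max 0 (-Real.log ‖x - y‖)) * (4 * (κ).toReal * R))) := by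
        gcongr <;> linarith
    _ ≤ _ := by
        have := mul_nonneg (norm_nonneg (x - y)) (mul_nonneg hR.le hL)
        nlinarith [mul_nonneg this hκ]
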